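/- arXiv:0812.2322 — 4 statements merged into one kernel-verified Lean document; each statement's English description precedes it below -/
import Mathlib

section
/- Let Ω ⊂ ℂ be a domain and w ∈ L²_loc(Ω) with w ≥ 0 a.e. Suppose there is a constant C₀ > 0 such that for every disk D(z₀,r) with D(z₀,2r) ⊂ Ω one has the reverse Hölder inequality ( (1/r²) ∫_{D(z₀,r)} w² )^{1/2} ≤ (C₀/r²) ∫_{D(z₀,r)} w. Then either w = 0 a.e. in Ω or w > 0 a.e. in Ω. -/
/-!
Let `S` be the set of points near which `w` vanishes a.e.; it is open. The reverse Hölder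
inequality and Cauchy–Schwarz give `∫_B w ≤ (C₀ / r) (∫_B w) |B \ Z|^{1/2}` on a disk `B`
of radius `r` when `w = 0` on `Z`, so `w = 0` a.e. on `B` as soon as `C₀² |B \ Z| < r²`.
Applied to concentric disks whose radii grow by a fixed factor, this shows that `S ∩ Ω` is
closed in `Ω`; applied at a Lebesgue density point of `{w = 0}`, it shows that `S ∩ Ω` is
nonempty unless `w > 0` a.e. Connectedness of `Ω` concludes.
-/

open MeasureTheory Metric Set Filter Topology

section CauchySchwarz

variable {α : Type*} [MeasurableSpace α] {μ : Measure α} {s t : Set α} {f : α → ℝ}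

theorem setIntegral_le_sqrt_setIntegral_sq_mul_sqrt_measureReal (hμs : μ s ≠ ⊤)
    (hf : AEStronglyMeasurable f (μ.restrict s)) (hf2 : IntegrableOn (fun x => f x ^ 2) s μ) :
    ∫ x in s, f x ∂μ ≤ √(∫ x in s, f x ^ 2 ∂μ) * √(μ.real s) := by
  have : IsFiniteMeasure (μ.restrict s) := isFiniteMeasure_restrict.2 hμs
  have hf2' : MemLp f (ENNReal.ofReal 2) (μ.restrict s) := by
    simpa using (memLp_two_iff_integrable_sq hf).2 hf2
  have hCS := integral_mul_norm_le_Lp_mul_Lq Real.HolderConjugate.two_two hf2'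
    (memLp_const (1 : ℝ))
  simp only [norm_one, mul_one, one_pow, integral_const, smul_eq_mul,
    Real.norm_eq_abs, Real.rpow_two, sq_abs, measureReal_restrict_apply_univ] at hCS
  rw [Real.sqrt_eq_rpow, Real.sqrt_eq_rpow]
  exact (le_abs_self _).trans (abs_integral_le_integral_abs.trans hCS)

theorem setIntegral_le_sqrt_setIntegral_sq_mul_sqrt_measureReal_sdiff
    (hs : NullMeasurableSet s μ) (hμs : μ s ≠ ⊤)
    (hf : AEStronglyMeasurable f (μ.restrict s))
    (hf2 : IntegrableOn (fun x => f x ^ 2) s μ) (ht : ∀ᵐ x ∂μ, x ∈ t → f x = 0) :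
    ∫ x in s, f x ∂μ ≤ √(∫ x in s, f x ^ 2 ∂μ) * √(μ.real (s \ t)) := by
  have hvanish : ∀ᵐ x ∂μ, x ∈ s \ (s \ t) → f x = 0 := by
    filter_upwards [ht] with x hx hxs using hx (of_not_not fun hxt => hxs.2 ⟨hxs.1, hxt⟩)
  rw [setIntegral_eq_of_subset_of_ae_sdiff_eq_zero hs sdiff_subset hvanish]
  calc ∫ x in s \ t, f x ∂μ
      ≤ √(∫ x in s \ t, f x ^ 2 ∂μ) * √(μ.real (s \ t)) :=
        setIntegral_le_sqrt_setIntegral_sq_mul_sqrt_measureReal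
          (measure_ne_top_of_subset sdiff_subset hμs) (hf.mono_set sdiff_subset)
          (hf2.mono_set sdiff_subset)
    _ ≤ √(∫ x in s, f x ^ 2 ∂μ) * √(μ.real (s \ t)) := by
        gcongr
        · exact ae_of_all _ fun x => sq_nonneg (f x)
        · exact sdiff_subset

end CauchySchwarz

theorem Besicovitch.exists_mem_eventually_measure_compl_inter_closedBall_le {β : Type*}
    [MetricSpace β] [MeasurableSpace β] [BorelSpace β] [SecondCountableTopology β]
    [HasBesicovitchCovering β] (μ : Measure β) [IsLocallyFiniteMeasure μ] {s : Set β}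
    (hs : MeasurableSet s) (hμs : μ s ≠ 0) {δ : ℝ} (hδ : 0 < δ) :
    ∃ x ∈ s, ∀ᶠ r in 𝓝[>] 0,
      μ (sᶜ ∩ closedBall x r) ≤ ENNReal.ofReal δ * μ (closedBall x r) := by
  have : (ae (μ.restrict s)).NeBot := ae_neBot.2 (by simpa using hμs)
  obtain ⟨x, hxs, hx⟩ := ((ae_restrict_mem hs).and
    (ae_restrict_of_ae (ae_tendsto_measure_inter_div_of_measurableSet μ hs.compl))).exists
  refine ⟨x, hxs, ?_⟩
  rw [indicator_of_notMem (not_not.2 hxs)] at hx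
  filter_upwards [(tendsto_order.1 hx).2 _ (ENNReal.ofReal_pos.2 hδ)] with r hr
  exact (ENNReal.div_le_iff_le_mul (Or.inr ENNReal.ofReal_ne_top)
    (Or.inr (ENNReal.ofReal_pos.2 hδ).ne')).1 hr.le

theorem Complex.volume_real_ball (a : ℂ) {r : ℝ} (hr : 0 ≤ r) :
    volume.real (ball a r) = Real.pi * r ^ 2 := by
  simp [measureReal_def, hr, mul_comm]

theorem Complex.volume_real_closedBall (a : ℂ) {r : ℝ} (hr : 0 ≤ r) :
    volume.real (closedBall a r) = Real.pi * r ^ 2 := by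
  simp [measureReal_def, hr, mul_comm]

section LocallyAEZeroSet

variable {α β : Type*} [PseudoMetricSpace α] [MeasurableSpace α] [Zero β]

/-- The complement of the essential support of `f`. -/
def locallyAEZeroSet (μ : Measure α) (f : α → β) : Set α :=
  {x | ∃ ρ > 0, ∀ᵐ y ∂μ, y ∈ ball x ρ → f y = 0}

variable {μ : Measure α} {f : α → β}

theorem isOpen_locallyAEZeroSet : IsOpen (locallyAEZeroSet μ f) := by
  refine isOpen_iff.2 fun x ⟨ρ, hρ, hx⟩ => ⟨ρ, hρ, fun y hy => ?_⟩
  have hsub : ball y (ρ - dist y x) ⊆ ball x ρ := ball_subset_ball' (by linarith)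
  exact ⟨ρ - dist y x, sub_pos.2 hy, by filter_upwards [hx] with z hz hzy using hz (hsub hzy)⟩

theorem ae_eq_zero_of_subset_locallyAEZeroSet [SecondCountableTopology α] {s : Set α}
    (hs : s ⊆ locallyAEZeroSet μ f) : ∀ᵐ x ∂μ, x ∈ s → f x = 0 := by
  refine ae_iff.2 <| measure_null_of_locally_null _ fun x hx => ?_
  obtain ⟨ρ, hρ, hx0⟩ := hs (of_not_imp hx)
  refine ⟨_, inter_mem_nhdsWithin _ (ball_mem_nhds x hρ),
    measure_mono_null ?_ (ae_iff.1 hx0)⟩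
  exact fun y hy hy0 => hy.1 fun _ => hy0 hy.2

end LocallyAEZeroSet

structure ReverseHolderWeight (Ω : Set ℂ) (w : ℂ → ℝ) (C₀ : ℝ) : Prop where
  sq_locallyIntegrableOn : LocallyIntegrableOn (fun z => w z ^ 2) Ω volume
  locallyIntegrableOn : LocallyIntegrableOn w Ω volume
  ae_nonneg : ∀ᵐ z ∂volume, z ∈ Ω → 0 ≤ w z
  reverse_holder : ∀ z₀ : ℂ, ∀ r : ℝ, 0 < r → ball z₀ (2 * r) ⊆ Ω →
    √((1 / r ^ 2) * ∫ z in ball z₀ r, w z ^ 2) ≤ (C₀ / r ^ 2) * ∫ z in ball z₀ r, w z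

namespace ReverseHolderWeight

variable {Ω : Set ℂ} {w : ℂ → ℝ} {C₀ : ℝ}

theorem ae_eq_zero_on_ball_of_sdiff_small (hw : ReverseHolderWeight Ω w C₀) {z₀ : ℂ}
    {r : ℝ} (hr : 0 < r) (hΩ : ball z₀ (2 * r) ⊆ Ω) {Z : Set ℂ}
    (hZ : ∀ᵐ z, z ∈ Z → w z = 0)
    (hsmall : C₀ ^ 2 * volume.real (ball z₀ r \ Z) < r ^ 2) :
    ∀ᵐ z, z ∈ ball z₀ r → w z = 0 := by
  have hcl : closedBall z₀ r ⊆ Ω := (closedBall_subset_ball (by linarith)).trans hΩ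
  have hint : IntegrableOn w (ball z₀ r) :=
    (hw.locallyIntegrableOn.integrableOn_compact_subset hcl (isCompact_closedBall _ _)).mono_set
      ball_subset_closedBall
  have hint2 : IntegrableOn (fun z => w z ^ 2) (ball z₀ r) :=
    (hw.sq_locallyIntegrableOn.integrableOn_compact_subset hcl
      (isCompact_closedBall _ _)).mono_set ball_subset_closedBall
  have hnn : 0 ≤ᵐ[volume.restrict (ball z₀ r)] w := by
    filter_upwards [ae_restrict_of_ae hw.ae_nonneg, ae_restrict_mem measurableSet_ball]
      with z hz hzB using hz (ball_subset_closedBall.trans hcl hzB)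
  set I := ∫ z in ball z₀ r, w z
  set v := volume.real (ball z₀ r \ Z)
  have hRH : √(∫ z in ball z₀ r, w z ^ 2) ≤ C₀ / r * I := by
    have h := hw.reverse_holder z₀ r hr hΩ
    rw [Real.sqrt_mul (by positivity), one_div, Real.sqrt_inv, Real.sqrt_sq hr.le] at h
    calc √(∫ z in ball z₀ r, w z ^ 2)
        = r * (r⁻¹ * √(∫ z in ball z₀ r, w z ^ 2)) := by field_simp
      _ ≤ r * (C₀ / r ^ 2 * I) := by gcongr
      _ = C₀ / r * I := by field_simp
  have hCv : C₀ * √v / r < 1 := by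
    refine (div_lt_one hr).2 (lt_of_pow_lt_pow_left₀ 2 hr.le ?_)
    rwa [mul_pow, Real.sq_sqrt measureReal_nonneg]
  -- `w` vanishes on `Z`, so Cauchy–Schwarz only sees the small set `ball z₀ r \ Z`.
  have hI : I ≤ C₀ * √v / r * I := calc
    I ≤ √(∫ z in ball z₀ r, w z ^ 2) * √v :=
        setIntegral_le_sqrt_setIntegral_sq_mul_sqrt_measureReal_sdiff
          measurableSet_ball.nullMeasurableSet measure_ball_lt_top.ne hint.1 hint2 hZ
    _ ≤ C₀ / r * I * √v := by gcongr
    _ = C₀ * √v / r * I := by ring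
  have hI0 : I = 0 := by nlinarith [integral_nonneg_of_ae hnn]
  exact (ae_restrict_iff' measurableSet_ball).1
    ((integral_eq_zero_iff_of_nonneg_ae hnn hint).1 hI0)

theorem ae_eq_zero_on_ball_of_ae_eq_zero_on_inner (hw : ReverseHolderWeight Ω w C₀) {a : ℂ}
    {s t : ℝ} (hs : 0 ≤ s) (hst : s ≤ t) (hΩ : ball a (2 * t) ⊆ Ω)
    (hgap : Real.pi * C₀ ^ 2 * (t ^ 2 - s ^ 2) < t ^ 2)
    (h0 : ∀ᵐ z, z ∈ ball a s → w z = 0) :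
    ∀ᵐ z, z ∈ ball a t → w z = 0 := by
  have ht : 0 < t := by
    rcases hst.lt_or_eq with h | rfl
    · exact hs.trans_lt h
    · by_contra! h
      simp [le_antisymm h hs] at hgap
  refine hw.ae_eq_zero_on_ball_of_sdiff_small ht hΩ h0 ?_
  rw [measureReal_sdiff (ball_subset_ball hst) measurableSet_ball,
    Complex.volume_real_ball a ht.le, Complex.volume_real_ball a hs]
  linarith

theorem ae_eq_zero_on_ball_of_ae_eq_zero_on_concentric (hw : ReverseHolderWeight Ω w C₀)
    {a : ℂ} {ρ t : ℝ} (hρ : 0 < ρ) (h0 : ∀ᵐ z, z ∈ ball a ρ → w z = 0)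
    (hΩ : ball a (2 * t) ⊆ Ω) :
    ∀ᵐ z, z ∈ ball a t → w z = 0 := by
  -- For this `q`, the annulus between the radii `t / q` and `t` is small enough to cross.
  obtain ⟨q, hq, hq1⟩ : ∃ q : ℝ, Real.pi * C₀ ^ 2 * (q ^ 2 - 1) < 1 ∧ 1 < q := by
    have hcont : ContinuousAt (fun q : ℝ => Real.pi * C₀ ^ 2 * (q ^ 2 - 1)) 1 := by fun_prop
    exact ((eventually_nhdsWithin_of_eventually_nhds
      (hcont.eventually_lt continuousAt_const (by simp))).and
      (self_mem_nhdsWithin (s := Ioi 1))).exists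
  have hstep : ∀ n : ℕ, ∀ t, t ≤ ρ * q ^ n → ball a (2 * t) ⊆ Ω →
      ∀ᵐ z, z ∈ ball a t → w z = 0 := by
    intro n
    induction n with
    | zero =>
      intro t ht _
      filter_upwards [h0] with z hz hzt using hz (ball_subset_ball (by simpa using ht) hzt)
    | succ n ih =>
      intro t ht htΩ
      rcases le_or_gt t 0 with ht0 | ht0
      · simp [ball_eq_empty.2 ht0]
      have hs : 0 < t / q := by positivity
      have hgap : Real.pi * C₀ ^ 2 * (t ^ 2 - (t / q) ^ 2) < t ^ 2 := by
        have hsq : t ^ 2 - (t / q) ^ 2 = (t / q) ^ 2 * (q ^ 2 - 1) := by field_simp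
        have hlt : (t / q) ^ 2 < t ^ 2 := by gcongr; exact div_lt_self ht0 hq1
        rw [hsq]
        nlinarith [pow_pos hs 2]
      refine hw.ae_eq_zero_on_ball_of_ae_eq_zero_on_inner hs.le (div_le_self ht0.le hq1.le) htΩ
        hgap (ih _ ?_ ((ball_subset_ball ?_).trans htΩ))
      · rw [div_le_iff₀ (by linarith), mul_assoc, ← pow_succ]
        exact ht
      · gcongr
        exact div_le_self ht0.le hq1.le
  obtain ⟨n, hn⟩ := pow_unbounded_of_one_lt (t / ρ) hq1
  exact hstep n t ((div_lt_iff₀' hρ).1 hn).le hΩ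

theorem closure_locallyAEZeroSet_inter_subset (hw : ReverseHolderWeight Ω w C₀)
    (hΩ : IsOpen Ω) :
    closure (locallyAEZeroSet volume w) ∩ Ω ⊆ locallyAEZeroSet volume w := by
  rintro z ⟨hz, hzΩ⟩
  obtain ⟨ε, hε, hεΩ⟩ := isOpen_iff.1 hΩ z hzΩ
  obtain ⟨a, ⟨ρ, hρ, ha⟩, haz⟩ := Metric.mem_closure_iff.1 hz (ε / 4) (by positivity)
  have hball : ball a (2 * (3 * ε / 8)) ⊆ Ω :=
    (ball_subset_ball' (by rw [dist_comm]; linarith)).trans hεΩ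
  have hza := hw.ae_eq_zero_on_ball_of_ae_eq_zero_on_concentric hρ ha hball
  refine ⟨ε / 8, by positivity, ?_⟩
  have hsub : ball z (ε / 8) ⊆ ball a (3 * ε / 8) := ball_subset_ball' (by linarith)
  filter_upwards [hza] with y hy hyz using hy (hsub hyz)

theorem inter_locallyAEZeroSet_nonempty (hw : ReverseHolderWeight Ω w C₀) (hΩ : IsOpen Ω)
    (hpos : ¬∀ᵐ z, z ∈ Ω → 0 < w z) : (Ω ∩ locallyAEZeroSet volume w).Nonempty := by
  have hnull : NullMeasurableSet ({z | w z ≤ 0} ∩ Ω) :=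
    (nullMeasurableSet_restrict hΩ.nullMeasurableSet).1 <|
      hw.locallyIntegrableOn.aestronglyMeasurable.aemeasurable.nullMeasurable measurableSet_Iic
  obtain ⟨Z, hZs, hZ, hZeq⟩ := hnull.exists_measurable_subset_ae_eq
  have hZ0 : volume Z ≠ 0 := by
    rw [measure_congr hZeq]
    refine fun h => hpos (ae_iff.2 (measure_mono_null (fun z hz => ?_) h))
    exact ⟨le_of_not_gt fun h => hz fun _ => h, of_not_imp hz⟩
  have hwZ : ∀ᵐ z, z ∈ Z → w z = 0 := by
    filter_upwards [hw.ae_nonneg] with z hz hzZ using le_antisymm (hZs hzZ).1 (hz (hZs hzZ).2)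
  set δ := 1 / (Real.pi * C₀ ^ 2 + 1)
  have hδ : 0 < δ := by positivity
  obtain ⟨x, hxZ, hx⟩ :=
    Besicovitch.exists_mem_eventually_measure_compl_inter_closedBall_le volume hZ hZ0 hδ
  have hxΩ : x ∈ Ω := (hZs hxZ).2
  obtain ⟨ε, hε, hεΩ⟩ := isOpen_iff.1 hΩ x hxΩ
  obtain ⟨r, hr, hr0, hrε⟩ := (hx.and (Ioo_mem_nhdsGT (half_pos hε))).exists
  refine ⟨x, hxΩ, r, hr0, hw.ae_eq_zero_on_ball_of_sdiff_small hr0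
    ((ball_subset_ball (by linarith)).trans hεΩ) hwZ ?_⟩
  have hvol : volume.real (ball x r \ Z) ≤ δ * (Real.pi * r ^ 2) := calc
    volume.real (ball x r \ Z) ≤ volume.real (Zᶜ ∩ closedBall x r) :=
        measureReal_mono (fun z hz => ⟨hz.2, ball_subset_closedBall hz.1⟩)
          (measure_ne_top_of_subset inter_subset_right measure_closedBall_lt_top.ne)
    _ ≤ δ * volume.real (closedBall x r) := by
        rw [measureReal_def, measureReal_def, ← ENNReal.toReal_ofReal hδ.le,
          ← ENNReal.toReal_mul]
        exact ENNReal.toReal_mono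
          (ENNReal.mul_ne_top ENNReal.ofReal_ne_top measure_closedBall_lt_top.ne) hr
    _ = δ * (Real.pi * r ^ 2) := by rw [Complex.volume_real_closedBall x hr0.le]
  have hδC : Real.pi * C₀ ^ 2 * δ < 1 := by
    rw [mul_one_div, div_lt_one (by positivity)]
    linarith
  calc C₀ ^ 2 * volume.real (ball x r \ Z) ≤ C₀ ^ 2 * (δ * (Real.pi * r ^ 2)) := by gcongr
    _ = (Real.pi * C₀ ^ 2 * δ) * r ^ 2 := by ring
    _ < r ^ 2 := mul_lt_of_lt_one_left (by positivity) hδC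

end ReverseHolderWeight

theorem stmt0_general (Ω : Set ℂ) (hΩo : IsOpen Ω) (hΩc : IsConnected Ω)
    (w : ℂ → ℝ)
    (hw2 : LocallyIntegrableOn (fun z => (w z) ^ 2) Ω volume)
    (hw1 : LocallyIntegrableOn w Ω volume)
    (hnn : ∀ᵐ z ∂volume, z ∈ Ω → 0 ≤ w z)
    (C₀ : ℝ)
    (hRH : ∀ z₀ : ℂ, ∀ r : ℝ, 0 < r → ball z₀ (2 * r) ⊆ Ω →
      Real.sqrt ((1 / r ^ 2) * ∫ z in ball z₀ r, (w z) ^ 2) ≤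
        (C₀ / r ^ 2) * ∫ z in ball z₀ r, w z) :
    (∀ᵐ z ∂volume, z ∈ Ω → w z = 0) ∨ (∀ᵐ z ∂volume, z ∈ Ω → 0 < w z) := by
  have hw : ReverseHolderWeight Ω w C₀ := ⟨hw2, hw1, hnn, hRH⟩
  by_cases h : (Ω ∩ locallyAEZeroSet volume w).Nonempty
  · exact Or.inl <| ae_eq_zero_of_subset_locallyAEZeroSet <|
      hΩc.isPreconnected.subset_of_closure_inter_subset isOpen_locallyAEZeroSet h
        (hw.closure_locallyAEZeroSet_inter_subset hΩo)
  · exact Or.inr <| not_not.1 <| mt (hw.inter_locallyAEZeroSet_nonempty hΩo) h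

/-- Reverse Hölder dichotomy: a nonnegative locally square-integrable function on a
domain Ω ⊂ ℂ satisfying a uniform reverse Hölder inequality on all disks with doubled
disk contained in Ω either vanishes a.e. in Ω or is positive a.e. in Ω. -/
theorem stmt0 (Ω : Set ℂ) (hΩo : IsOpen Ω) (hΩc : IsConnected Ω)
    (w : ℂ → ℝ)
    (hw2 : LocallyIntegrableOn (fun z => (w z) ^ 2) Ω volume)
    (hw1 : LocallyIntegrableOn w Ω volume)
    (hnn : ∀ᵐ z ∂volume, z ∈ Ω → 0 ≤ w z)
    (C₀ : ℝ) (hC₀ : 0 < C₀)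
    (hRH : ∀ z₀ : ℂ, ∀ r : ℝ, 0 < r → ball z₀ (2 * r) ⊆ Ω →
      Real.sqrt ((1 / r ^ 2) * ∫ z in ball z₀ r, (w z) ^ 2) ≤
        (C₀ / r ^ 2) * ∫ z in ball z₀ r, w z) :
    (∀ᵐ z ∂volume, z ∈ Ω → w z = 0) ∨ (∀ᵐ z ∂volume, z ∈ Ω → 0 < w z) :=
  stmt0_general Ω hΩo hΩc w hw2 hw1 hnn C₀ hRH
end

section
/- Let Φ, Ψ : Ω → ℂ be maps differentiable at a point z₀ ∈ Ω (in the real sense), and suppose Im((Φ(z) − Φ(z₀))/(Ψ(z) − Ψ(z₀))) ≤ 0 for all z ∈ Ω \ {z₀}, with Ψ injective. If moreover Ψ is quasiconformal at z₀ in the sense that |Ψ_z̄(z₀)| < |Ψ_z(z₀)| (so the first-order Taylor term of Ψ is invertible), then Im(Φ_z(z₀) · conj(Ψ_z(z₀))) ≤ 0. -/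
/-!
Along each ray `z₀ + t • h`, `t ↓ 0`, the difference quotients of `Φ` and `Ψ` tend to `A h` and
`B h`, so the sign condition passes to the real quadratic form: `Im (A h * conj (B h)) ≤ 0` for
all `h`. Write `A h = a h + a' h̄`, `B h = b h + b' h̄` with Wirtinger coefficients and put
`D = |b|² - |b'|² > 0`. The test vector `h = b̄ w̄ - b' w` is sent by `B` to `D w̄`, and a suitable
unit `w` gives `Im (a b̄ - a' b̄') + |a' b - a b'| ≤ 0`. Finally
`D a b̄ = |b|² (a b̄ - a' b̄') + (a' b - a b') b̄ b̄'` and `|b'| ≤ |b|` give `Im (a b̄) ≤ 0`.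
-/

open Complex Filter Topology ComplexConjugate

theorem Complex.exists_norm_eq_one_mul_sq_eq (q : ℂ) :
    ∃ w : ℂ, ‖w‖ = 1 ∧ q * w ^ 2 = ‖q‖ * I := by
  rcases eq_or_ne q 0 with rfl | hq
  · exact ⟨1, by simp⟩
  have hq' : (‖q‖ : ℂ) ≠ 0 := by simpa using hq
  have hsq : ((I * conj q / ‖q‖) ^ (2⁻¹ : ℂ)) ^ 2 = I * conj q / ‖q‖ := cpow_ofNat_inv_pow _ 2
  refine ⟨(I * conj q / ‖q‖) ^ (2⁻¹ : ℂ), ?_, ?_⟩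
  · rw [← pow_eq_one_iff_of_nonneg (norm_nonneg _) two_ne_zero, ← norm_pow, hsq]
    simp [hq]
  · rw [hsq, mul_div_assoc', mul_left_comm, mul_conj, normSq_eq_norm_sq]
    field_simp
    push_cast
    ring

theorem Complex.im_mul_conj_nonpos_of_im_div_nonpos {z w : ℂ} (h : (z / w).im ≤ 0) :
    (z * conj w).im ≤ 0 := by
  rcases eq_or_ne w 0 with rfl | hw
  · simp
  have hzw : z * conj w = z / w * (normSq w : ℂ) := by
    rw [← mul_conj]
    field_simp
  rw [hzw, im_mul_ofReal]
  exact mul_nonpos_of_nonpos_of_nonneg h (normSq_nonneg w)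

theorem ContinuousLinearMap.apply_eq_wirtinger (A : ℂ →L[ℝ] ℂ) (h : ℂ) :
    A h = (A 1 - I * A I) / 2 * h + (A 1 + I * A I) / 2 * conj h := by
  have hA : A h = h.re * A 1 + h.im * A I := by
    rw [← real_smul, ← real_smul, ← map_smul, ← map_smul, ← map_add]
    congr 1
    apply Complex.ext <;> simp
  have hre := add_conj h
  have him := sub_conj h
  push_cast at hre him
  rw [hA]
  linear_combination (-A 1 / 2) * hre + (I * A I / 2) * him + (h.im * A I) * I_sq

theorem im_apply_mul_conj_apply_nonpos {E : Type*} [NormedAddCommGroup E] [NormedSpace ℝ E]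
    {Φ Ψ : E → ℂ} {A B : E →L[ℝ] ℂ} {z₀ : E} (hΦ : HasFDerivAt Φ A z₀) (hΨ : HasFDerivAt Ψ B z₀)
    (hle : ∀ᶠ z in 𝓝[≠] z₀, ((Φ z - Φ z₀) * conj (Ψ z - Ψ z₀)).im ≤ 0) (h : E) :
    (A h * conj (B h)).im ≤ 0 := by
  rcases eq_or_ne h 0 with rfl | hh
  · simp
  have hray : Tendsto (fun t : ℝ => z₀ + t • h) (𝓝[>] 0) (𝓝[≠] z₀) := by
    refine tendsto_nhdsWithin_of_tendsto_nhds_of_eventually_within _ ?_ ?_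
    · exact ((Continuous.tendsto (by fun_prop) 0).mono_left nhdsWithin_le_nhds).trans (by simp)
    · filter_upwards [self_mem_nhdsWithin] with t (ht : 0 < t)
      simpa using smul_ne_zero ht.ne' hh
  have hslope : Tendsto (fun t : ℝ => (slope (fun t : ℝ => Φ (z₀ + t • h)) 0 t *
      conj (slope (fun t : ℝ => Ψ (z₀ + t • h)) 0 t)).im) (𝓝[>] 0) (𝓝 (A h * conj (B h)).im) := by
    have lΦ := hasDerivAt_iff_tendsto_slope.mp (hΦ.hasLineDerivAt h)
    have lΨ := hasDerivAt_iff_tendsto_slope.mp (hΨ.hasLineDerivAt h)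
    exact (continuous_im.tendsto _).comp <| (lΦ.mul ((continuous_conj.tendsto _).comp lΨ)).mono_left
      (nhdsWithin_mono _ fun t ht => ne_of_gt ht)
  refine le_of_tendsto hslope ?_
  filter_upwards [hray.eventually hle] with t ht
  simp only [slope, vsub_eq_sub, sub_zero, zero_smul, add_zero]
  rw [real_smul, real_smul, map_mul, conj_ofReal, mul_mul_mul_comm, ← ofReal_mul, im_ofReal_mul]
  exact mul_nonpos_of_nonneg_of_nonpos (mul_self_nonneg _) ht

section WirtingerForm

variable {a a' b b' : ℂ}

theorem im_add_norm_nonpos_of_forall_im_nonpos (hb : ‖b'‖ < ‖b‖)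
    (hform : ∀ h : ℂ, ((a * h + a' * conj h) * conj (b * h + b' * conj h)).im ≤ 0) :
    (a * conj b - a' * conj b').im + ‖a' * b - a * b'‖ ≤ 0 := by
  obtain ⟨w, hw, hqw⟩ := exists_norm_eq_one_mul_sq_eq (a' * b - a * b')
  have hww : w * conj w = 1 := by simp [mul_conj', hw]
  set D : ℝ := ‖b‖ ^ 2 - ‖b'‖ ^ 2
  have hD : 0 < D := sub_pos.2 (pow_lt_pow_left₀ hb (norm_nonneg _) two_ne_zero)
  set h := conj b * conj w - b' * w
  have hconj : conj h = b * w - conj b' * conj w := by simp [h]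
  have hBh : b * h + b' * conj h = D * conj w := by
    rw [hconj]
    push_cast [D]
    linear_combination conj w * (mul_conj' b - mul_conj' b')
  have hAh : a * h + a' * conj h =
      (a * conj b - a' * conj b') * conj w + (a' * b - a * b') * w := by
    rw [hconj]
    ring
  have hprod : (a * h + a' * conj h) * conj (b * h + b' * conj h) =
      D * (a * conj b - a' * conj b' + ‖a' * b - a * b'‖ * I) := by
    rw [hAh, hBh, map_mul, conj_ofReal, conj_conj]
    linear_combination D * (a * conj b - a' * conj b') * hww + D * hqw
  have hform_h := hform h
  rw [hprod, im_ofReal_mul] at hform_h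
  simpa using nonpos_of_mul_nonpos_right hform_h hD

theorem im_mul_conj_nonpos_of_forall_im_nonpos (hb : ‖b'‖ < ‖b‖)
    (hform : ∀ h : ℂ, ((a * h + a' * conj h) * conj (b * h + b' * conj h)).im ≤ 0) :
    (a * conj b).im ≤ 0 := by
  have hpq := im_add_norm_nonpos_of_forall_im_nonpos hb hform
  have hD : 0 < ‖b‖ ^ 2 - ‖b'‖ ^ 2 := sub_pos.2 (pow_lt_pow_left₀ hb (norm_nonneg _) two_ne_zero)
  have hid : ((‖b‖ ^ 2 - ‖b'‖ ^ 2 : ℝ) : ℂ) * (a * conj b) =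
      ‖b‖ ^ 2 * (a * conj b - a' * conj b') + (a' * b - a * b') * (conj b * conj b') := by
    push_cast
    linear_combination (a * conj b) * mul_conj' b' - (a' * conj b') * mul_conj' b
  have hcross : ((a' * b - a * b') * (conj b * conj b')).im ≤ ‖a' * b - a * b'‖ * ‖b‖ ^ 2 := by
    refine (im_le_norm _).trans ?_
    rw [norm_mul, norm_mul, norm_conj, norm_conj, sq]
    gcongr
  have hscaled : (‖b‖ ^ 2 - ‖b'‖ ^ 2) * (a * conj b).im ≤ 0 := by
    rw [← im_ofReal_mul, hid, add_im, ← ofReal_pow, im_ofReal_mul]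
    nlinarith [norm_nonneg (a' * b - a * b')]
  exact nonpos_of_mul_nonpos_right hscaled hD

end WirtingerForm

theorem stmt10_general (Ω : Set ℂ) (hΩo : IsOpen Ω) (z₀ : ℂ) (hz₀ : z₀ ∈ Ω)
    (Φ Ψ : ℂ → ℂ) (A B : ℂ →L[ℝ] ℂ)
    (hΦ : HasFDerivAt Φ A z₀) (hΨ : HasFDerivAt Ψ B z₀)
    (hqc : ‖(B 1 + I * B I) / 2‖ < ‖(B 1 - I * B I) / 2‖)
    (hneg : ∀ z ∈ Ω, z ≠ z₀ → ((Φ z - Φ z₀) / (Ψ z - Ψ z₀)).im ≤ 0) :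
    (((A 1 - I * A I) / 2) * (starRingEnd ℂ) ((B 1 - I * B I) / 2)).im ≤ 0 := by
  have hle : ∀ᶠ z in 𝓝[≠] z₀, ((Φ z - Φ z₀) * conj (Ψ z - Ψ z₀)).im ≤ 0 := by
    filter_upwards [nhdsWithin_le_nhds (hΩo.mem_nhds hz₀), self_mem_nhdsWithin] with z hz hne
    exact im_mul_conj_nonpos_of_im_div_nonpos (hneg z hz hne)
  refine im_mul_conj_nonpos_of_forall_im_nonpos (a' := (A 1 + I * A I) / 2) hqc fun h => ?_
  rw [← A.apply_eq_wirtinger, ← B.apply_eq_wirtinger]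
  exact im_apply_mul_conj_apply_nonpos hΦ hΨ hle h

/-- If `Φ, Ψ` are (real-)differentiable at `z₀ ∈ Ω` with derivatives `A, B`,
`Im((Φ z − Φ z₀)/(Ψ z − Ψ z₀)) ≤ 0` for all `z ∈ Ω \ {z₀}`, `Ψ` is injective on `Ω`,
and `|Ψ_z̄(z₀)| < |Ψ_z(z₀)|`, then `Im(Φ_z(z₀) conj(Ψ_z(z₀))) ≤ 0`.
Here `Φ_z = (Φ_x − iΦ_y)/2 = (A 1 − i·A i)/2` and `Φ_z̄ = (A 1 + i·A i)/2`, etc. -/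
theorem stmt10 (Ω : Set ℂ) (hΩo : IsOpen Ω) (z₀ : ℂ) (hz₀ : z₀ ∈ Ω)
    (Φ Ψ : ℂ → ℂ) (A B : ℂ →L[ℝ] ℂ)
    (hΦ : HasFDerivAt Φ A z₀) (hΨ : HasFDerivAt Ψ B z₀)
    (hΨinj : Set.InjOn Ψ Ω)
    (hqc : ‖(B 1 + I * B I) / 2‖ < ‖(B 1 - I * B I) / 2‖)
    (hneg : ∀ z ∈ Ω, z ≠ z₀ → ((Φ z - Φ z₀) / (Ψ z - Ψ z₀)).im ≤ 0) :
    (((A 1 - I * A I) / 2) * (starRingEnd ℂ) ((B 1 - I * B I) / 2)).im ≤ 0 :=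
  stmt10_general Ω hΩo z₀ hz₀ Φ Ψ A B hΦ hΨ hqc hneg
end

section
/- Let F ⊂ W^{1,2}_loc(Ω) be an ℝ-linear subspace such that every nonzero g ∈ F is a K-quasiconformal homeomorphism of the domain Ω ⊂ ℂ onto its image. Then dim_ℝ F ≤ 2. -/
/-!
Fix two points `z₀ ≠ z₁` of `Ω`. The `ℝ`-linear map `g ↦ g z₁ - g z₀` from `F` to `ℂ ≅ ℝ²` is
injective, since a nonzero element of its kernel would take the same value at `z₀` and `z₁`.
-/

open MeasureTheory Topology

universe u

theorem Submodule.rank_le_of_injOn {R : Type*} {α M : Type u} [Ring R] [AddCommGroup M]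
    [Module R M] {s : Set α} (hs : s.Nontrivial) (F : Submodule R (α → M))
    (hinj : ∀ g ∈ F, g ≠ 0 → Set.InjOn g s) :
    Module.rank R F ≤ Module.rank R M := by
  obtain ⟨x, hx, y, hy, hxy⟩ := hs
  let evalSub : F →ₗ[R] M :=
    (LinearMap.proj (R := R) (φ := fun _ : α => M) x - LinearMap.proj y) ∘ₗ F.subtype
  refine evalSub.rank_le_of_injective ((injective_iff_map_eq_zero _).2 ?_)
  rintro ⟨g, hg⟩ hgxy
  by_contra hg0
  exact hxy (hinj g hg (by simpa using hg0) hx hy (sub_eq_zero.1 hgxy))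

theorem IsOpen.nontrivial_of_nonempty {X : Type*} [TopologicalSpace X] [T1Space X]
    [∀ x : X, (𝓝[≠] x).NeBot] {s : Set X} (hs : IsOpen s) (hne : s.Nonempty) :
    s.Nontrivial :=
  let ⟨z, hz⟩ := hne
  (infinite_of_mem_nhds z (hs.mem_nhds hz)).nontrivial

theorem stmt11_general (Ω : Set ℂ) (hΩo : IsOpen Ω) (hΩc : IsConnected Ω)
    (K : ℝ) (F : Submodule ℝ (ℂ → ℂ))
    (hqc : ∀ g ∈ F, g ≠ 0 →
      ContinuousOn g Ω ∧ Set.InjOn g Ω ∧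
      (∀ᵐ z ∂(volume.restrict Ω), ∃ D : ℂ →L[ℝ] ℂ,
        HasFDerivWithinAt g D Ω z ∧
        ‖D‖ ^ 2 ≤ K * LinearMap.det (D : ℂ →ₗ[ℝ] ℂ))) :
    Module.rank ℝ F ≤ 2 :=
  calc Module.rank ℝ F ≤ Module.rank ℝ ℂ :=
        F.rank_le_of_injOn (hΩo.nontrivial_of_nonempty hΩc.nonempty)
          fun g hg hg0 => (hqc g hg hg0).2.1
    _ = 2 := Complex.rank_real_complex

/-- A linear family of `K`-quasiconformal mappings: an `ℝ`-linear subspace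
`F ⊆ W^{1,2}_loc(Ω)` all of whose nonzero elements are `K`-quasiconformal
homeomorphisms of the domain `Ω ⊂ ℂ` onto their images (continuous, injective,
a.e. differentiable with `‖Dg‖² ≤ K·J(z,g)`). Then `dim_ℝ F ≤ 2`. -/
theorem stmt11 (Ω : Set ℂ) (hΩo : IsOpen Ω) (hΩc : IsConnected Ω)
    (K : ℝ) (hK : 1 ≤ K) (F : Submodule ℝ (ℂ → ℂ))
    (hqc : ∀ g ∈ F, g ≠ 0 →
      ContinuousOn g Ω ∧ Set.InjOn g Ω ∧
      (∀ᵐ z ∂(volume.restrict Ω), ∃ D : ℂ →L[ℝ] ℂ,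
        HasFDerivWithinAt g D Ω z ∧
        ‖D‖ ^ 2 ≤ K * LinearMap.det (D : ℂ →ₗ[ℝ] ℂ))) :
    Module.rank ℝ F ≤ 2 :=
  stmt11_general Ω hΩo hΩc K F hqc
end

section
/- Pointwise algebraic lemma: let p, q, P, Q, a, b, μ, ν ∈ ℂ satisfy P = a p + b conj(q), Q = a q + b conj(p), q = μ p + ν conj(p), Q = μ P + ν conj(P), and b = λ' Im(a) with λ' = −2iν/(1 + |ν|² − |μ|²), |μ| + |ν| < 1. Then (|p|² − |q|²) Im(a) = (−1 + |μ|² − |ν|²) Im(p · conj(P)). -/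
/-!
Expanding `conj P` gives `Im (p conj P) = -|p|² Im a + Im (conj b · p q)`. As `b` is a real
multiple of `-2iν`, the last term is that multiple of `2 Re (conj ν · p q)`, which the relation
`q = μ p + ν conj p` turns into `|q|² + (|ν|² - |μ|²) |p|²`. Altogether
`(1 + |ν|² - |μ|²) Im (p conj P) = (|q|² - |p|²) Im a`.
-/

open Complex ComplexConjugate

lemma im_mul_conj_mul_add_mul_conj (p q a b : ℂ) :
    (p * conj (a * p + b * conj q)).im = -(‖p‖ ^ 2 * a.im) + (conj b * (p * q)).im := by
  simp only [Complex.sq_norm, normSq_apply, map_add, map_mul, conj_conj, mul_im, mul_re,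
    add_re, add_im, conj_re, conj_im]
  ring

lemma two_mul_re_conj_mul_mul_of_eq {p q μ ν : ℂ} (hq : q = μ * p + ν * conj p) :
    2 * (conj ν * (p * q)).re = ‖q‖ ^ 2 + (‖ν‖ ^ 2 - ‖μ‖ ^ 2) * ‖p‖ ^ 2 := by
  subst hq
  simp only [Complex.sq_norm, normSq_apply, mul_im, mul_re, conj_re, conj_im, add_re, add_im]
  ring

lemma im_conj_mul_of_eq_ofReal_mul {b ν : ℂ} {r : ℝ} (hb : b = r * (-2 * I * ν)) (z : ℂ) :
    (conj b * z).im = r * (2 * (conj ν * z).re) := by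
  subst hb
  simp only [map_mul, map_neg, map_ofNat, conj_I, conj_ofReal, mul_im, mul_re, neg_re, neg_im,
    I_re, I_im, ofReal_re, ofReal_im, conj_re, conj_im, re_ofNat, im_ofNat]
  ring

theorem stmt15_general (p q P a b μ ν : ℂ)
    (hμν : ‖μ‖ + ‖ν‖ < 1)
    (hchain1 : P = a * p + b * (starRingEnd ℂ) q)
    (hbeltΦ : q = μ * p + ν * (starRingEnd ℂ) p)
    (hb : b = (-2 * I * ν / (1 + ‖ν‖ ^ 2 - ‖μ‖ ^ 2)) * (a.im : ℂ)) :
    (‖p‖ ^ 2 - ‖q‖ ^ 2) * a.im =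
      (-1 + ‖μ‖ ^ 2 - ‖ν‖ ^ 2) * (p * (starRingEnd ℂ) P).im := by
  have hD : 1 + ‖ν‖ ^ 2 - ‖μ‖ ^ 2 ≠ 0 := by
    have := norm_nonneg μ
    have := norm_nonneg ν
    nlinarith
  have hb' : b = ((a.im / (1 + ‖ν‖ ^ 2 - ‖μ‖ ^ 2) : ℝ) : ℂ) * (-2 * I * ν) := by
    rw [hb]
    push_cast
    ring
  rw [hchain1, im_mul_conj_mul_add_mul_conj, im_conj_mul_of_eq_ofReal_mul hb',
    two_mul_re_conj_mul_mul_of_eq hbeltΦ]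
  field_simp
  ring

/-- Pointwise algebraic lemma encoding the chain-rule computation (2.3): if
`P = a p + b conj q`, `Q = a q + b conj p`, `q = μ p + ν conj p`, `Q = μ P + ν conj P`,
`b = λ' Im a` with `λ' = −2iν/(1 + |ν|² − |μ|²)` and `|μ| + |ν| < 1`, then
`(|p|² − |q|²) Im a = (−1 + |μ|² − |ν|²) Im(p conj P)`. -/
theorem stmt15 (p q P Q a b μ ν : ℂ)
    (hμν : ‖μ‖ + ‖ν‖ < 1)
    (hchain1 : P = a * p + b * (starRingEnd ℂ) q)
    (hchain2 : Q = a * q + b * (starRingEnd ℂ) p)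
    (hbeltΦ : q = μ * p + ν * (starRingEnd ℂ) p)
    (hbeltΨ : Q = μ * P + ν * (starRingEnd ℂ) P)
    (hb : b = (-2 * I * ν / (1 + ‖ν‖ ^ 2 - ‖μ‖ ^ 2)) * (a.im : ℂ)) :
    (‖p‖ ^ 2 - ‖q‖ ^ 2) * a.im =
      (-1 + ‖μ‖ ^ 2 - ‖ν‖ ^ 2) * (p * (starRingEnd ℂ) P).im :=
  stmt15_general p q P a b μ ν hμν hchain1 hbeltΦ hb
end
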